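/- arXiv:1212.4447 — 3 statements merged into one kernel-verified Lean document; each statement's English description precedes it below -/
import Mathlib

section
/- Let n ∈ ℕ and k ∈ {1, 2, ..., n−1}. For the simple symmetric random walk started at k, the restricted expectation of the hitting time of n on the event that n is reached before 0 equals E^k[τ_n 1_{τ_n < τ_0}] = k(n−k)(n+k)/(3n). -/
/-!
Reaching `n` before `0` at time `m` has probability `(Kᵐ 𝟙_{n}) k`, where `K` is the
transition operator of the walk killed on leaving the strip `(0, n)`. The mean exit time
`x (n - x)` drops by one under `K` inside the strip, so it is a Lyapunov function making `K`
a strict contraction: these probabilities decay geometrically and `K f = f` forces `f = 0`.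
Hence `G = ∑ₘ Kᵐ 𝟙_{n}` and `T = ∑ₘ m Kᵐ 𝟙_{n}` are the unique solutions of
`K G = G - 𝟙_{n}` and `K (T + G) = T`, namely `x / n` and `x (n - x) (n + x) / (3 n)`
on `[0, n]`.
-/

open MeasureTheory ProbabilityTheory Filter Set

noncomputable section

open Classical in
/-- Indicator (as a real number) of a proposition. -/
def ind (P : Prop) : ℝ := if P then 1 else 0

/-- Position after `k` steps of the ±1 nearest-neighbour walk started at `x`,
with steps given by `s` (`true` = step `+1`, `false` = step `-1`). -/
def walkPos {n : ℕ} (x : ℤ) (s : Fin n → Bool) (k : ℕ) : ℤ :=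
  x + ∑ i ∈ Finset.range k, (if h : i < n then (if s ⟨i, h⟩ then (1 : ℤ) else -1) else 0)

/-- `E^x [ φ(τ_z, path up to τ_z) ; τ_z < ∞ ]` for the simple symmetric random walk
started at `x`: the sum over all finite paths whose *first* visit to `z` (at a
positive time) occurs at their last step, a path of length `n` carrying
probability `(1/2)^n`. -/
def hitSum (x z : ℤ) (φ : (n : ℕ) → (Fin n → Bool) → ℝ) : ℝ :=
  ∑' n : ℕ, (2 : ℝ)⁻¹ ^ n * ∑ s : Fin n → Bool,
    ind (0 < n ∧ walkPos x s n = z ∧ ∀ k, 0 < k → k < n → walkPos x s k ≠ z) * φ n s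

/-- The killed-walk weight `exp(-∑_{m=0}^{n-1} V(S_m))` along a path of length `n`
started at `x`. -/
def wt (V : ℤ → ℝ) (x : ℤ) {n : ℕ} (s : Fin n → Bool) : ℝ :=
  Real.exp (- ∑ m ∈ Finset.range n, V (walkPos x s m))

open Topology

namespace SimpleRandomWalk

section Paths

variable {m : ℕ}

lemma walkPos_zero (x : ℤ) (s : Fin m → Bool) : walkPos x s 0 = x := by
  simp [walkPos]

lemma walkPos_cons_succ (x : ℤ) (b : Bool) (t : Fin m → Bool) (j : ℕ) :
    walkPos x (Fin.cons b t : Fin (m + 1) → Bool) (j + 1) =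
      walkPos (if b then x + 1 else x - 1) t j := by
  simp only [walkPos, Finset.sum_range_succ']
  have hstep : ∀ i, (if h : i + 1 < m + 1 then
      (if (Fin.cons b t : Fin (m + 1) → Bool) ⟨i + 1, h⟩ then (1 : ℤ) else -1) else 0) =
      (if h : i < m then (if t ⟨i, h⟩ then (1 : ℤ) else -1) else 0) := by
    intro i
    by_cases hi : i < m
    · rw [dif_pos (by omega), dif_pos hi]; rfl
    · rw [dif_neg (by omega), dif_neg hi]
  simp only [hstep]
  cases b <;> simp <;> ring

lemma abs_walkPos_succ_sub_le (x : ℤ) (s : Fin m → Bool) (j : ℕ) :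
    |walkPos x s (j + 1) - walkPos x s j| ≤ 1 := by
  simp only [walkPos, Finset.sum_range_succ]
  split_ifs <;> simp

lemma walkPos_mem_Ioo {N n : ℕ} {x : ℤ} {s : Fin m → Bool} (hx : x ∈ Ioo 0 (N : ℤ))
    (h : ∀ j, 0 < j → j < n → walkPos x s j ≠ 0 ∧ walkPos x s j ≠ N) :
    ∀ j < n, walkPos x s j ∈ Ioo 0 (N : ℤ) := by
  intro j
  induction j with
  | zero => intro _; rwa [walkPos_zero]
  | succ j ih =>
    intro hj
    obtain ⟨hpos, hlt⟩ := ih (by omega)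
    obtain ⟨hne0, hneN⟩ := h (j + 1) (by omega) hj
    have hstep := abs_le.mp (abs_walkPos_succ_sub_le x s j)
    constructor <;> omega

variable (N : ℕ)

def ExitsAtTop (x : ℤ) (s : Fin m → Bool) : Prop :=
  walkPos x s m = N ∧ ∀ j < m, walkPos x s j ∈ Ioo 0 (N : ℤ)

lemma exitsAtTop_cons_iff (x : ℤ) (b : Bool) (t : Fin m → Bool) :
    ExitsAtTop N x (Fin.cons b t : Fin (m + 1) → Bool) ↔
      x ∈ Ioo 0 (N : ℤ) ∧ ExitsAtTop N (if b then x + 1 else x - 1) t := by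
  simp only [ExitsAtTop, Nat.forall_lt_succ_left, walkPos_cons_succ, walkPos_zero]
  tauto

lemma sum_fin_succ_pi {α M : Type*} [Fintype α] [AddCommMonoid M]
    (F : (Fin (m + 1) → α) → M) :
    ∑ s, F s = ∑ a : α, ∑ t : Fin m → α, F (Fin.cons a t) := by
  rw [← (Fin.consEquiv fun _ => α).sum_comp, Fintype.sum_prod_type]
  rfl

end Paths

section KilledStep

variable (N : ℕ)

def killedStep : Module.End ℝ (ℤ → ℝ) where
  toFun f x := if x ∈ Ioo 0 (N : ℤ) then (f (x + 1) + f (x - 1)) / 2 else 0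
  map_add' f g := by
    ext x
    split_ifs <;> simp only [Pi.add_apply, *, if_true, if_false] <;> ring
  map_smul' c f := by
    ext x
    split_ifs <;> simp only [Pi.smul_apply, smul_eq_mul, RingHom.id_apply, *, if_true,
      if_false] <;> ring

variable {N}

lemma killedStep_apply_of_mem {x : ℤ} (hx : x ∈ Ioo 0 (N : ℤ)) (f : ℤ → ℝ) :
    killedStep N f x = (f (x + 1) + f (x - 1)) / 2 :=
  if_pos hx

lemma killedStep_apply_of_notMem {x : ℤ} (hx : x ∉ Ioo 0 (N : ℤ)) (f : ℤ → ℝ) :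
    killedStep N f x = 0 :=
  if_neg hx

lemma killedStep_indicator_Icc {x : ℤ} (hx : x ∈ Ioo 0 (N : ℤ)) (φ : ℤ → ℝ) :
    killedStep N ((Icc 0 (N : ℤ)).indicator φ) x = (φ (x + 1) + φ (x - 1)) / 2 := by
  rw [killedStep_apply_of_mem hx, indicator_of_mem (show x + 1 ∈ Icc 0 (N : ℤ) by grind),
    indicator_of_mem (show x - 1 ∈ Icc 0 (N : ℤ) by grind)]

lemma hasSum_killedStep_apply {F : ℕ → ℤ → ℝ} {S : ℤ → ℝ}
    (h : ∀ x, HasSum (fun m => F m x) (S x)) (x : ℤ) :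
    HasSum (fun m => killedStep N (F m) x) (killedStep N S x) := by
  by_cases hx : x ∈ Ioo 0 (N : ℤ)
  · simp only [killedStep_apply_of_mem hx]
    exact ((h _).add (h _)).div_const 2
  · simp only [killedStep_apply_of_notMem hx]
    exact hasSum_zero

lemma killedStep_mono : Monotone (killedStep N) := by
  intro f g hfg x
  by_cases hx : x ∈ Ioo 0 (N : ℤ)
  · simp only [killedStep_apply_of_mem hx]
    linarith [hfg (x + 1), hfg (x - 1)]
  · simp only [killedStep_apply_of_notMem hx, le_refl]

lemma killedStep_pow_mono (m : ℕ) : Monotone (killedStep N ^ m) := by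
  rw [Module.End.coe_pow]
  exact killedStep_mono.iterate m

variable (N)

def meanExitTime : ℤ → ℝ := (Icc 0 (N : ℤ)).indicator fun x => x * (N - x)

def contractionRate : ℝ := (N : ℝ) ^ 2 / ((N : ℝ) ^ 2 + 1)

variable {N}

lemma meanExitTime_nonneg (x : ℤ) : 0 ≤ meanExitTime N x :=
  indicator_nonneg (fun y hy => mul_nonneg (by exact_mod_cast hy.1)
    (sub_nonneg.mpr (by exact_mod_cast hy.2))) x

lemma meanExitTime_le_sq (x : ℤ) : meanExitTime N x ≤ (N : ℝ) ^ 2 := by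
  by_cases hx : x ∈ Icc 0 (N : ℤ)
  · rw [meanExitTime, indicator_of_mem hx]
    have h0 : (0 : ℝ) ≤ x := by exact_mod_cast hx.1
    have hN : (x : ℝ) ≤ N := by exact_mod_cast hx.2
    nlinarith
  · rw [meanExitTime, indicator_of_notMem hx]
    positivity

lemma one_le_meanExitTime {x : ℤ} (hx : x ∈ Ioo 0 (N : ℤ)) : 1 ≤ meanExitTime N x := by
  rw [meanExitTime, indicator_of_mem (Ioo_subset_Icc_self hx)]
  have h0 : (1 : ℝ) ≤ x := by exact_mod_cast hx.1
  have hN : (x : ℝ) + 1 ≤ N := by exact_mod_cast hx.2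
  nlinarith

lemma contractionRate_nonneg : 0 ≤ contractionRate N := by
  unfold contractionRate
  positivity

lemma contractionRate_lt_one : contractionRate N < 1 :=
  (div_lt_one (by positivity)).mpr (lt_add_one _)

lemma killedStep_meanExitTime {x : ℤ} (hx : x ∈ Ioo 0 (N : ℤ)) :
    killedStep N (meanExitTime N) x = meanExitTime N x - 1 := by
  rw [meanExitTime, killedStep_indicator_Icc hx, indicator_of_mem (Ioo_subset_Icc_self hx)]
  push_cast
  ring

lemma killedStep_meanExitTime_le :
    killedStep N (meanExitTime N) ≤ contractionRate N • meanExitTime N := by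
  intro x
  rw [Pi.smul_apply, smul_eq_mul]
  by_cases hx : x ∈ Ioo 0 (N : ℤ)
  · have hψ := meanExitTime_le_sq (N := N) x
    rw [killedStep_meanExitTime hx, contractionRate, div_mul_eq_mul_div,
      le_div_iff₀ (by positivity)]
    nlinarith
  · rw [killedStep_apply_of_notMem hx]
    exact mul_nonneg contractionRate_nonneg (meanExitTime_nonneg x)

lemma killedStep_pow_meanExitTime_le (m : ℕ) :
    (killedStep N ^ m) (meanExitTime N) ≤ contractionRate N ^ m • meanExitTime N := by
  induction m with
  | zero => simp
  | succ m ih =>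
    calc (killedStep N ^ (m + 1)) (meanExitTime N)
        = (killedStep N ^ m) (killedStep N (meanExitTime N)) := by
          rw [pow_succ, Module.End.mul_apply]
      _ ≤ (killedStep N ^ m) (contractionRate N • meanExitTime N) :=
          killedStep_pow_mono m killedStep_meanExitTime_le
      _ = contractionRate N • (killedStep N ^ m) (meanExitTime N) := map_smul _ _ _
      _ ≤ contractionRate N • contractionRate N ^ m • meanExitTime N :=
          smul_le_smul_of_nonneg_left ih contractionRate_nonneg
      _ = contractionRate N ^ (m + 1) • meanExitTime N := by rw [smul_smul, pow_succ']

end KilledStep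

section Decay

variable {N : ℕ}

lemma abs_killedStep_le (f : ℤ → ℝ) (x : ℤ) :
    |killedStep N f x| ≤ (∑ y ∈ Finset.Icc 0 (N : ℤ), |f y|) * meanExitTime N x := by
  set B := ∑ y ∈ Finset.Icc 0 (N : ℤ), |f y|
  have hB : 0 ≤ B := Finset.sum_nonneg fun y _ => abs_nonneg (f y)
  by_cases hx : x ∈ Ioo 0 (N : ℤ)
  · have hle : ∀ y ∈ Finset.Icc 0 (N : ℤ), |f y| ≤ B := fun y hy =>
      Finset.single_le_sum (fun y _ => abs_nonneg (f y)) hy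
    have h1 := hle (x + 1) (Finset.mem_Icc.mpr ⟨by grind, by grind⟩)
    have h2 := hle (x - 1) (Finset.mem_Icc.mpr ⟨by grind, by grind⟩)
    rw [killedStep_apply_of_mem hx, abs_div, abs_two]
    calc |f (x + 1) + f (x - 1)| / 2 ≤ (|f (x + 1)| + |f (x - 1)|) / 2 := by
          gcongr; exact abs_add_le _ _
      _ ≤ B := by linarith
      _ ≤ B * meanExitTime N x := le_mul_of_one_le_right hB (one_le_meanExitTime hx)
  · rw [killedStep_apply_of_notMem hx, abs_zero]
    exact mul_nonneg hB (meanExitTime_nonneg x)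

lemma abs_killedStep_pow_succ_le (f : ℤ → ℝ) (m : ℕ) (x : ℤ) :
    |(killedStep N ^ (m + 1)) f x| ≤
      (∑ y ∈ Finset.Icc 0 (N : ℤ), |f y|) * meanExitTime N x * contractionRate N ^ m := by
  set B := ∑ y ∈ Finset.Icc 0 (N : ℤ), |f y|
  have hstep : ∀ y, |killedStep N f y| ≤ (B • meanExitTime N) y := abs_killedStep_le f
  have hupper : (killedStep N ^ m) (B • meanExitTime N) x ≤
      B * meanExitTime N x * contractionRate N ^ m := by
    have hB : 0 ≤ B := Finset.sum_nonneg fun y _ => abs_nonneg (f y)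
    rw [map_smul, Pi.smul_apply, smul_eq_mul, mul_assoc, mul_comm (meanExitTime N x)]
    exact mul_le_mul_of_nonneg_left (killedStep_pow_meanExitTime_le m x) hB
  rw [pow_succ, Module.End.mul_apply, abs_le]
  constructor
  · have := killedStep_pow_mono (N := N) m
      (show -(B • meanExitTime N) ≤ killedStep N f from fun y => neg_le_of_abs_le (hstep y))
    rw [map_neg] at this
    linarith [this x, Pi.neg_apply ((killedStep N ^ m) (B • meanExitTime N)) x]
  · linarith [killedStep_pow_mono (N := N) m
      (show killedStep N f ≤ B • meanExitTime N from fun y => le_of_abs_le (hstep y)) x]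

lemma tendsto_killedStep_pow (f : ℤ → ℝ) (x : ℤ) :
    Tendsto (fun m : ℕ => (killedStep N ^ m) f x) atTop (𝓝 0) := by
  rw [← tendsto_add_atTop_iff_nat 1]
  refine squeeze_zero_norm (fun m => abs_killedStep_pow_succ_le f m x) ?_
  simpa using (tendsto_pow_atTop_nhds_zero_of_lt_one contractionRate_nonneg
    contractionRate_lt_one).const_mul _

lemma eq_zero_of_killedStep_eq {f : ℤ → ℝ} (hf : killedStep N f = f) : f = 0 := by
  funext x
  have hconst : ∀ m, (killedStep N ^ m) f x = f x := fun m => by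
    rw [Module.End.coe_pow, Function.iterate_fixed hf]
  exact tendsto_nhds_unique (by simpa only [hconst] using tendsto_const_nhds)
    (tendsto_killedStep_pow (N := N) f x)

lemma summable_killedStep_pow (f : ℤ → ℝ) (x : ℤ) :
    Summable (fun m : ℕ => (killedStep N ^ m) f x) := by
  rw [← summable_nat_add_iff 1]
  exact ((summable_geometric_of_lt_one contractionRate_nonneg
    contractionRate_lt_one).mul_left _).of_norm_bounded
    (fun m => abs_killedStep_pow_succ_le f m x)

lemma summable_natCast_mul_killedStep_pow (f : ℤ → ℝ) (x : ℤ) :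
    Summable (fun m : ℕ => (m : ℝ) * (killedStep N ^ m) f x) := by
  rw [← summable_nat_add_iff 1]
  have hρ : ‖contractionRate N‖ < 1 := by
    rw [Real.norm_of_nonneg contractionRate_nonneg]; exact contractionRate_lt_one
  have hgeom : Summable (fun m : ℕ => ((m : ℝ) + 1) * contractionRate N ^ m) := by
    simpa [add_mul] using (summable_pow_mul_geometric_of_norm_lt_one 1 hρ).add
      (summable_geometric_of_norm_lt_one hρ)
  refine (hgeom.mul_left ((∑ y ∈ Finset.Icc 0 (N : ℤ), |f y|) * meanExitTime N x))
    |>.of_norm_bounded fun m => ?_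
  rw [norm_mul, Real.norm_eq_abs, Real.norm_eq_abs, Nat.abs_cast, mul_left_comm]
  push_cast
  gcongr
  exact abs_killedStep_pow_succ_le f m x

end Decay

section ExitAtTop

variable (N : ℕ)

def exitAtTopProb (x : ℤ) : ℝ := ∑' m : ℕ, (killedStep N ^ m) (Pi.single (N : ℤ) 1) x

def exitAtTopTime (x : ℤ) : ℝ :=
  ∑' m : ℕ, (m : ℝ) * (killedStep N ^ m) (Pi.single (N : ℤ) 1) x

def exitProbFormula : ℤ → ℝ := (Icc 0 (N : ℤ)).indicator fun x => x / N

def exitTimeFormula : ℤ → ℝ :=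
  (Icc 0 (N : ℤ)).indicator fun x => x * (N - x) * (N + x) / (3 * N)

variable {N}

lemma killedStep_exitTimeFormula_add :
    killedStep N (exitTimeFormula N + exitProbFormula N) = exitTimeFormula N := by
  funext x
  by_cases hx : x ∈ Ioo 0 (N : ℤ)
  · rw [exitTimeFormula, exitProbFormula, ← indicator_add', killedStep_indicator_Icc hx,
      indicator_of_mem (Ioo_subset_Icc_self hx)]
    have hN : (N : ℝ) ≠ 0 := Nat.cast_ne_zero.mpr (by have := hx.1; have := hx.2; omega)
    simp only [Pi.add_apply]
    push_cast
    field_simp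
    ring
  · rw [killedStep_apply_of_notMem hx, exitTimeFormula]
    by_cases hx' : x ∈ Icc 0 (N : ℤ)
    · have : x = 0 ∨ x = N := by grind
      rcases this with rfl | rfl <;> simp
    · rw [indicator_of_notMem hx']

lemma killedStep_exitProbFormula (hN : 0 < N) :
    killedStep N (exitProbFormula N) = exitProbFormula N - Pi.single (N : ℤ) 1 := by
  have hN' : (N : ℝ) ≠ 0 := by positivity
  funext x
  by_cases hx : x ∈ Ioo 0 (N : ℤ)
  · rw [exitProbFormula, killedStep_indicator_Icc hx, Pi.sub_apply,
      indicator_of_mem (Ioo_subset_Icc_self hx), Pi.single_eq_of_ne hx.2.ne]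
    push_cast
    field_simp
    ring
  · rw [killedStep_apply_of_notMem hx, Pi.sub_apply, exitProbFormula, eq_comm, sub_eq_zero]
    by_cases hx' : x ∈ Icc 0 (N : ℤ)
    · have : x = 0 ∨ x = N := by grind
      rcases this with rfl | rfl
      · simp [Pi.single_eq_of_ne (show (0 : ℤ) ≠ N by omega)]
      · simp [hN']
    · rw [indicator_of_notMem hx', Pi.single_eq_of_ne (by grind)]

lemma killedStep_exitAtTopProb :
    killedStep N (exitAtTopProb N) = exitAtTopProb N - Pi.single (N : ℤ) 1 := by
  funext x
  have hG : ∀ y, HasSum (fun m => (killedStep N ^ m) (Pi.single (N : ℤ) 1) y)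
      (exitAtTopProb N y) := fun y => (summable_killedStep_pow _ y).hasSum
  refine (hasSum_killedStep_apply hG x).unique ?_
  simpa [pow_succ', Module.End.mul_apply] using (hasSum_nat_add_iff' 1).mpr (hG x)

lemma killedStep_exitAtTopTime_add :
    killedStep N (exitAtTopTime N + exitAtTopProb N) = exitAtTopTime N := by
  funext x
  set δ : ℤ → ℝ := Pi.single (N : ℤ) 1
  have hT : ∀ y, HasSum (fun m : ℕ => (m : ℝ) * (killedStep N ^ m) δ y)
      (exitAtTopTime N y) :=
    fun y => (summable_natCast_mul_killedStep_pow _ y).hasSum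
  have hG : ∀ y, HasSum (fun m => (killedStep N ^ m) δ y) (exitAtTopProb N y) :=
    fun y => (summable_killedStep_pow _ y).hasSum
  have hTG : ∀ y, HasSum (fun m : ℕ => (((m : ℝ) + 1) • (killedStep N ^ m) δ) y)
      ((exitAtTopTime N + exitAtTopProb N) y) := fun y => by
    simpa [add_mul] using (hT y).add (hG y)
  refine (hasSum_killedStep_apply hTG x).unique ?_
  simpa [pow_succ', Module.End.mul_apply] using (hasSum_nat_add_iff' 1).mpr (hT x)

lemma exitAtTopProb_eq_formula (hN : 0 < N) : exitAtTopProb N = exitProbFormula N :=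
  sub_eq_zero.mp <| eq_zero_of_killedStep_eq <| by
    rw [map_sub, killedStep_exitAtTopProb, killedStep_exitProbFormula hN,
      sub_sub_sub_cancel_right]

lemma exitAtTopTime_eq_formula (hN : 0 < N) : exitAtTopTime N = exitTimeFormula N :=
  sub_eq_zero.mp <| eq_zero_of_killedStep_eq <| by
    have h := killedStep_exitAtTopTime_add (N := N)
    rw [exitAtTopProb_eq_formula hN] at h
    rw [← add_sub_add_right_eq_sub _ _ (exitProbFormula N), map_sub, h,
      killedStep_exitTimeFormula_add, add_sub_add_right_eq_sub]

end ExitAtTop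

section Counting

variable {N : ℕ}

lemma ind_mul_ind (P Q : Prop) : ind P * ind Q = ind (P ∧ Q) := by
  by_cases hP : P <;> by_cases hQ : Q <;> simp [ind, hP, hQ]

lemma prob_exitsAtTop (m : ℕ) (x : ℤ) :
    (2⁻¹ : ℝ) ^ m * ∑ s : Fin m → Bool, ind (ExitsAtTop N x s) =
      (killedStep N ^ m) (Pi.single (N : ℤ) 1) x := by
  induction m generalizing x with
  | zero => simp [ExitsAtTop, walkPos_zero, ind, Pi.single_apply]
  | succ m ih =>
    rw [sum_fin_succ_pi, Fintype.sum_bool, pow_succ' (killedStep N), Module.End.mul_apply]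
    simp only [exitsAtTop_cons_iff, if_true, Bool.false_eq_true, if_false]
    by_cases hx : x ∈ Ioo 0 (N : ℤ)
    · simp only [hx, true_and, killedStep_apply_of_mem hx, ← ih]
      ring
    · simp [hx, killedStep_apply_of_notMem hx, ind]

lemma exitsAtTop_iff {x : ℤ} (hx : x ∈ Ioo 0 (N : ℤ)) {m : ℕ} (s : Fin m → Bool) :
    ExitsAtTop N x s ↔
      (0 < m ∧ walkPos x s m = N ∧ ∀ j, 0 < j → j < m → walkPos x s j ≠ N) ∧
        ∀ j, 0 < j → j < m → walkPos x s j ≠ 0 := by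
  constructor
  · rintro ⟨hend, hin⟩
    have hm : 0 < m := Nat.pos_of_ne_zero fun hm => by
      subst hm; rw [walkPos_zero] at hend; exact hx.2.ne hend
    exact ⟨⟨hm, hend, fun j _ hj => (hin j hj).2.ne⟩, fun j _ hj => (hin j hj).1.ne'⟩
  · rintro ⟨⟨_, hend, hneN⟩, hne0⟩
    exact ⟨hend, walkPos_mem_Ioo hx fun j hj hjm => ⟨hne0 j hj hjm, hneN j hj hjm⟩⟩

lemma hitSum_eq_exitAtTopTime {x : ℤ} (hx : x ∈ Ioo 0 (N : ℤ)) :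
    hitSum x N (fun m s => (m : ℝ) * ind (∀ j, 0 < j → j < m → walkPos x s j ≠ 0)) =
      exitAtTopTime N x := by
  refine tsum_congr fun m => ?_
  rw [← prob_exitsAtTop, Finset.mul_sum, Finset.mul_sum, Finset.mul_sum]
  refine Finset.sum_congr rfl fun s _ => ?_
  rw [exitsAtTop_iff hx, ← ind_mul_ind (0 < m ∧ _)]
  ring

end Counting

end SimpleRandomWalk

open SimpleRandomWalk in
/-- Proposition 2.1. For the simple symmetric random walk started
at `k ∈ {1, …, n−1}`, `E^k[τ_n 1_{τ_n < τ_0}] = k(n−k)(n+k)/(3n)`. -/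
theorem srw_restricted_hitting_time (n k : ℕ) (hk : 1 ≤ k) (hkn : k < n) :
    hitSum (k : ℤ) (n : ℤ)
        (fun m s => (m : ℝ) * ind (∀ j, 0 < j → j < m → walkPos (k : ℤ) s j ≠ 0)) =
      (k : ℝ) * ((n : ℝ) - (k : ℝ)) * ((n : ℝ) + (k : ℝ)) / (3 * (n : ℝ)) := by
  have hx : (k : ℤ) ∈ Ioo 0 (n : ℤ) := ⟨by omega, by omega⟩
  rw [hitSum_eq_exitAtTopTime hx, exitAtTopTime_eq_formula (by omega), exitTimeFormula,
    indicator_of_mem (Ioo_subset_Icc_self hx)]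
  push_cast
  ring

end
end

section
/- Let M > 0 and a_1 ∈ ℕ∪{0}, and let V : ℤ → {0, M} be any potential with V(x) = 0 for all x with −a_1 < x ≤ 0 and V(−a_1) = M. Then for the killed random walk started at 0, P^V(τ_1 > τ_{−a_1} | τ_1 < ∞) ≤ min{ e^{−M}, ((2a_1(e^M − 1) + 1)(1 + a_1))^{−1} }. -/
open MeasureTheory ProbabilityTheory Filter Set

noncomputable section

/-!
For `a₁ ≥ 1`, cutting a path at its first visit to `-a₁` and then at its next visit to `0` (the
strong Markov property; on step lists the bijection `(l₁, l₂) ↦ l₁ ++ l₂`) writes the numerator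
as `F₁ * F₂ * D`, where `D` is the denominator, `F₁` the killed mass of going from `0` to `-a₁`
before `1`, and `F₂` that of going from `-a₁` to `0` before `1`. A killed hitting mass is at most
any supersolution `u` of `e^{-V y} (u (y + 1) + u (y - 1)) / 2 ≤ u y` with `u ≥ 1` at the target.
Piecewise linear supersolutions give `F₁ ≤ 1 / (1 + a₁)` (gambler's ruin) and
`F₂ ≤ 1 / (2 a₁ (e^M - 1) + 1)`, while `F₁ ≤ 1` and `F₂ ≤ e^{-M}` because every path leaving
`-a₁` pays `e^{-V(-a₁)}`. For `a₁ = 0` the numerator is `F₁ * D` with `F₁ ≤ e^{-V 0} = e^{-M}`.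
-/

open scoped ENNReal

lemma ENNReal.tsum_list_eq_nil_add_cons {α : Type*} (f : List α → ℝ≥0∞) :
    ∑' l, f l = f [] + ∑' (a) (l), f (a :: l) := by
  rw [ENNReal.tsum_eq_add_tsum_ite [], ← ENNReal.tsum_prod]
  congr 1
  have hcons : Function.Injective fun p : α × List α => p.1 :: p.2 :=
    fun p q h => Prod.ext (List.cons.inj h).1 (List.cons.inj h).2
  refine (hcons.tsum_eq fun l hl => ?_).symm.trans
    (tsum_congr fun p => if_neg (List.cons_ne_nil _ _))
  cases l with
  | nil => exact absurd (if_pos rfl) hl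
  | cons a l => exact ⟨(a, l), rfl⟩

lemma ENNReal.tsum_list_eq_tsum_ofFn {α : Type*} [Fintype α] (f : List α → ℝ≥0∞) :
    ∑' l, f l = ∑' n, ∑ s : Fin n → α, f (List.ofFn s) := by
  rw [← List.equivSigmaTuple.symm.tsum_eq, ENNReal.tsum_sigma']
  simp [tsum_fintype]

namespace KilledWalk

variable {V : ℤ → ℝ} {C : Set ℤ} {x y z : ℤ} {l l₁ l₂ m₁ m₂ : List Bool}
  {P Q : List Bool → Prop}

def step (b : Bool) : ℤ := if b then 1 else -1

@[simp] lemma step_true : step true = 1 := rfl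
@[simp] lemma step_false : step false = -1 := rfl

lemma step_le_one (b : Bool) : step b ≤ 1 := by cases b <;> simp

lemma sum_bool_step {M : Type*} [AddCommMonoid M] (f : ℤ → M) (x : ℤ) :
    ∑ b : Bool, f (x + step b) = f (x + 1) + f (x - 1) := by
  simp [sub_eq_add_neg]

def endPos (x : ℤ) (l : List Bool) : ℤ := x + (l.map step).sum

@[simp] lemma endPos_nil (x : ℤ) : endPos x [] = x := by simp [endPos]

@[simp] lemma endPos_cons (x : ℤ) (b : Bool) (l : List Bool) :
    endPos x (b :: l) = endPos (x + step b) l := by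
  simp [endPos, add_assoc]

lemma endPos_append (x : ℤ) (l₁ l₂ : List Bool) :
    endPos x (l₁ ++ l₂) = endPos (endPos x l₁) l₂ := by
  simp [endPos, add_assoc]

lemma walkPos_eq_endPos_take {n : ℕ} (x : ℤ) (s : Fin n → Bool) (k : ℕ) :
    walkPos x s k = endPos x ((List.ofFn s).take k) := by
  induction k with
  | zero => simp [walkPos]
  | succ k ih =>
    rw [List.take_add_one, endPos_append, ← ih, walkPos, Finset.sum_range_succ, ← add_assoc,
      ← walkPos]
    by_cases hk : k < n <;> simp [hk, endPos, step]

/-- The walk from `x` with steps `l` (`true` = `+1`) avoids `C ∪ {z}` before its last position,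
which is `z`. -/
def Reaches (C : Set ℤ) (z : ℤ) : ℤ → List Bool → Prop
  | x, [] => x = z
  | x, b :: l => x ≠ z ∧ x ∉ C ∧ Reaches C z (x + step b) l

/-- `Reaches` with time `0` exempt: the first visit to `z` at a positive time, as in `τ_z`. -/
def HitsFirst (C : Set ℤ) (z x : ℤ) : List Bool → Prop
  | [] => False
  | b :: l => x ∉ C ∧ Reaches C z (x + step b) l

def Visits (y x : ℤ) (l : List Bool) : Prop :=
  ∃ k < l.length, endPos x (l.take k) = y

lemma Reaches.endPos_eq (h : Reaches C z x l) : endPos x l = z := by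
  induction l generalizing x with
  | nil => simpa [Reaches] using h
  | cons b l ih => simpa using ih h.2.2

lemma HitsFirst.endPos_eq (h : HitsFirst C z x l) : endPos x l = z := by
  cases l with
  | nil => exact h.elim
  | cons b l => simpa using h.2.endPos_eq

lemma HitsFirst.ne_nil (h : HitsFirst C z x l) : l ≠ [] := by
  rintro rfl; exact h

lemma hitsFirst_iff_reaches (hxz : x ≠ z) : HitsFirst C z x l ↔ Reaches C z x l := by
  cases l with
  | nil => exact iff_of_false id hxz
  | cons b l => exact (and_iff_right hxz).symm

lemma reaches_empty_iff :
    Reaches ∅ z x l ↔ endPos x l = z ∧ ∀ k < l.length, endPos x (l.take k) ≠ z := by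
  induction l generalizing x with
  | nil => simp [Reaches]
  | cons b l ih =>
    simp only [Reaches, ih, List.length_cons, Nat.forall_lt_succ_left, List.take_zero,
      List.take_succ_cons, endPos_nil, endPos_cons, Set.mem_empty_iff_false, not_false_eq_true,
      true_and]
    tauto

lemma hitsFirst_empty_iff : HitsFirst ∅ z x l ↔
    0 < l.length ∧ endPos x l = z ∧ ∀ k, 0 < k → k < l.length → endPos x (l.take k) ≠ z := by
  cases l with
  | nil => simp [HitsFirst]
  | cons b l =>
    simp only [HitsFirst, reaches_empty_iff, Set.mem_empty_iff_false, not_false_eq_true, true_and,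
      List.length_cons, Nat.zero_lt_succ, endPos_cons, and_congr_right_iff]
    refine fun _ => ⟨fun h k hk0 hk => ?_,
      fun h k hk => by simpa using h (k + 1) k.succ_pos (by omega)⟩
    obtain ⟨j, rfl⟩ := Nat.exists_eq_succ_of_ne_zero hk0.ne'
    simpa using h j (by omega)

lemma visits_cons (b : Bool) : Visits y x (b :: l) ↔ x = y ∨ Visits y (x + step b) l := by
  simp only [Visits, List.length_cons, Nat.exists_lt_succ_left, List.take_zero,
    List.take_succ_cons, endPos_nil, endPos_cons]

lemma exists_pos_visit_cons (b : Bool) :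
    (∃ k, 0 < k ∧ k < (b :: l).length ∧ endPos x ((b :: l).take k) = y) ↔
      Visits y (x + step b) l := by
  constructor
  · rintro ⟨_ | k, hk0, hk, hy⟩
    · exact absurd hk0 (lt_irrefl 0)
    · exact ⟨k, by simpa using hk, by simpa using hy⟩
  · rintro ⟨k, hk, hy⟩
    exact ⟨k + 1, k.succ_pos, by simpa using hk, by simpa using hy⟩

lemma Reaches.append (h₁ : Reaches (insert z C) y x l₁) (h₂ : Reaches C z y l₂) :
    Reaches C z x (l₁ ++ l₂) := by
  induction l₁ generalizing x with
  | nil => rwa [List.nil_append, show x = y from h₁]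
  | cons b l₁ ih =>
    obtain ⟨-, hx, h₁⟩ := h₁
    exact ⟨fun h => hx (.inl h), fun h => hx (.inr h), ih h₁⟩

lemma Reaches.eq_of_append_eq (h₁ : Reaches C y x l₁) (h₂ : Reaches C y x m₁)
    (h : l₁ ++ l₂ = m₁ ++ m₂) : l₁ = m₁ := by
  induction l₁ generalizing x m₁ with
  | nil =>
    cases m₁ with
    | nil => rfl
    | cons c m₁ => exact absurd h₁ h₂.1
  | cons b l₁ ih =>
    cases m₁ with
    | nil => exact absurd h₂ h₁.1
    | cons c m₁ =>
      simp only [List.cons_append, List.cons.injEq] at h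
      obtain ⟨rfl, h⟩ := h
      rw [ih h₁.2.2 h₂.2.2 h]

lemma Reaches.exists_append (h : Reaches C z x l) (hv : Visits y x l) :
    ∃ l₁ l₂, Reaches (insert z C) y x l₁ ∧ Reaches C z y l₂ ∧ l₁ ++ l₂ = l := by
  induction l generalizing x with
  | nil => exact absurd hv.choose_spec.1 (Nat.not_lt_zero _)
  | cons b l ih =>
    obtain ⟨hxz, hxC, h⟩ := h
    by_cases hxy : x = y
    · subst hxy
      exact ⟨[], b :: l, rfl, ⟨hxz, hxC, h⟩, rfl⟩
    · obtain ⟨l₁, l₂, h₁, h₂, rfl⟩ := ih h (((visits_cons b).1 hv).resolve_left hxy)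
      exact ⟨b :: l₁, l₂, ⟨hxy, by simp [hxz, hxC], h₁⟩, h₂, rfl⟩

lemma visits_of_le_of_lt (hxy : x ≤ y) (hy : y < endPos x l) : Visits y x l := by
  induction l generalizing x with
  | nil => exact absurd hy (by simpa using hxy.not_gt)
  | cons b l ih =>
    rw [visits_cons]
    rcases hxy.eq_or_lt with rfl | hxy
    · exact .inl rfl
    · exact .inr (ih (by linarith [step_le_one b]) (by simpa using hy))

lemma HitsFirst.eq_of_append_eq (h₁ : HitsFirst C y x l₁) (h₂ : HitsFirst C y x m₁)
    (h : l₁ ++ l₂ = m₁ ++ m₂) : l₁ = m₁ := by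
  cases l₁ with
  | nil => exact h₁.elim
  | cons b l₁ =>
    cases m₁ with
    | nil => exact h₂.elim
    | cons c m₁ =>
      simp only [List.cons_append, List.cons.injEq] at h
      obtain ⟨rfl, h⟩ := h
      rw [h₁.2.eq_of_append_eq h₂.2 h]

lemma hitsFirst_and_visit_iff (hxz : x ≠ z) (hyz : y ≠ z) :
    (HitsFirst C z x l ∧ ∃ k, 0 < k ∧ k < l.length ∧ endPos x (l.take k) = y) ↔
      ∃ l₁ l₂, HitsFirst (insert z C) y x l₁ ∧ HitsFirst C z y l₂ ∧ l₁ ++ l₂ = l := by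
  constructor
  · rintro ⟨h, hv⟩
    cases l with
    | nil => exact h.elim
    | cons b l =>
      obtain ⟨l₁, l₂, h₁, h₂, rfl⟩ := h.2.exists_append ((exists_pos_visit_cons b).1 hv)
      exact ⟨b :: l₁, l₂, ⟨by simp [hxz, h.1], h₁⟩, (hitsFirst_iff_reaches hyz).2 h₂, rfl⟩
  · rintro ⟨_ | ⟨b, l₁⟩, l₂, h₁, h₂, rfl⟩
    · exact h₁.elim
    · refine ⟨⟨fun hx => h₁.1 (.inr hx), h₁.2.append ((hitsFirst_iff_reaches hyz).1 h₂)⟩, ?_⟩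
      rw [List.cons_append, exists_pos_visit_cons]
      refine ⟨l₁.length, ?_, ?_⟩
      · simpa [List.length_pos_iff] using h₂.ne_nil
      · simpa using h₁.2.endPos_eq

lemma HitsFirst.exists_pos_visit (h : HitsFirst C z x l) (hxy : x < y) (hyz : y < z) :
    ∃ k, 0 < k ∧ k < l.length ∧ endPos x (l.take k) = y := by
  cases l with
  | nil => exact h.elim
  | cons b l =>
    rw [exists_pos_visit_cons]
    exact visits_of_le_of_lt (by linarith [step_le_one b]) (by rwa [h.2.endPos_eq])

def pathWeight (V : ℤ → ℝ) : ℤ → List Bool → ℝ≥0∞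
  | _, [] => 1
  | x, b :: l => 2⁻¹ * ENNReal.ofReal (Real.exp (-V x)) * pathWeight V (x + step b) l

@[simp] lemma pathWeight_nil (V : ℤ → ℝ) (x : ℤ) : pathWeight V x [] = 1 := rfl

lemma pathWeight_append (V : ℤ → ℝ) (x : ℤ) (l₁ l₂ : List Bool) :
    pathWeight V x (l₁ ++ l₂) = pathWeight V x l₁ * pathWeight V (endPos x l₁) l₂ := by
  induction l₁ generalizing x with
  | nil => simp
  | cons b l₁ ih => simp [pathWeight, ih, mul_assoc]

lemma pathWeight_eq_ofReal (V : ℤ → ℝ) (x : ℤ) (l : List Bool) :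
    pathWeight V x l = ENNReal.ofReal
      (2⁻¹ ^ l.length * Real.exp (-∑ m ∈ Finset.range l.length, V (endPos x (l.take m)))) := by
  induction l generalizing x with
  | nil => simp
  | cons b l ih =>
    rw [pathWeight, ih, List.length_cons, Finset.sum_range_succ', ← ENNReal.ofReal_ofNat 2,
      ← ENNReal.ofReal_inv_of_pos two_pos, ← ENNReal.ofReal_mul (by norm_num),
      ← ENNReal.ofReal_mul (by positivity)]
    congr 1
    simp only [List.take_succ_cons, endPos_cons, List.take_zero, endPos_nil, neg_add, Real.exp_add,
      pow_succ]
    ring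

lemma pathWeight_ne_top (V : ℤ → ℝ) (x : ℤ) (l : List Bool) : pathWeight V x l ≠ ⊤ := by
  rw [pathWeight_eq_ofReal]
  exact ENNReal.ofReal_ne_top

lemma ofReal_wt (V : ℤ → ℝ) (x : ℤ) {n : ℕ} (s : Fin n → Bool) :
    ENNReal.ofReal (2⁻¹ ^ n * wt V x s) = pathWeight V x (List.ofFn s) := by
  simp [pathWeight_eq_ofReal, wt, walkPos_eq_endPos_take]

/-- `E^x[exp (-∑_{m < n} V (S_m)); P]`, the walk running for the `n` steps of each list. -/
def killedMass (V : ℤ → ℝ) (x : ℤ) (P : List Bool → Prop) : ℝ≥0∞ :=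
  ∑' l, {l | P l}.indicator (pathWeight V x) l

lemma killedMass_mono (h : ∀ l, P l → Q l) : killedMass V x P ≤ killedMass V x Q :=
  ENNReal.tsum_le_tsum fun _ => indicator_le_indicator_of_subset h (fun _ => zero_le) _

lemma killedMass_eq_zero (h : ∀ l, ¬ P l) : killedMass V x P = 0 := by
  simp [killedMass, h]

lemma killedMass_cons (V : ℤ → ℝ) (x : ℤ) (P : List Bool → Prop) :
    killedMass V x P = {l | P l}.indicator (pathWeight V x) [] +
      2⁻¹ * ENNReal.ofReal (Real.exp (-V x)) *
        ∑ b, killedMass V (x + step b) fun l => P (b :: l) := by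
  rw [killedMass, ENNReal.tsum_list_eq_nil_add_cons, tsum_fintype, Finset.mul_sum]
  congr 1
  refine Finset.sum_congr rfl fun b _ => ?_
  rw [killedMass, ← ENNReal.tsum_mul_left]
  refine tsum_congr fun l => ?_
  by_cases h : P (b :: l) <;> simp [h, pathWeight]

lemma killedMass_le_of_forall_length_lt {c : ℝ≥0∞}
    (h : ∀ L, killedMass V x (fun l => P l ∧ l.length < L) ≤ c) : killedMass V x P ≤ c := by
  rw [killedMass, ENNReal.tsum_eq_iSup_sum]
  refine iSup_le fun F => le_trans ?_ (h (F.sup List.length + 1))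
  refine le_trans (le_of_eq (Finset.sum_congr rfl fun l hl => ?_)) (ENNReal.sum_le_tsum F)
  have hlen : l.length ≤ F.sup List.length := Finset.le_sup hl
  by_cases hP : P l <;> simp [hP, hlen]

theorem killedMass_eq_mul {A B : List Bool → Prop} (hA : ∀ l, A l → endPos x l = y)
    (huniq : ∀ l₁ l₂ m₁ m₂, A l₁ → A m₁ → l₁ ++ l₂ = m₁ ++ m₂ → l₁ = m₁)
    (hP : ∀ l, P l ↔ ∃ l₁ l₂, A l₁ ∧ B l₂ ∧ l₁ ++ l₂ = l) :
    killedMass V x P = killedMass V x A * killedMass V y B := by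
  let S : Set (List Bool × List Bool) := {p | A p.1 ∧ B p.2}
  let g : S → List Bool := fun p => p.1.1 ++ p.1.2
  have hg : Function.Injective g := by
    rintro ⟨⟨l₁, l₂⟩, hl⟩ ⟨⟨m₁, m₂⟩, hm⟩ h
    obtain rfl := huniq _ _ _ _ hl.1 hm.1 h
    obtain rfl := List.append_cancel_left h
    rfl
  have hrange : Function.support ({l | P l}.indicator (pathWeight V x)) ⊆ range g := fun l hl => by
    obtain ⟨l₁, l₂, h₁, h₂, rfl⟩ := (hP l).1 (mem_of_indicator_ne_zero hl)
    exact ⟨⟨(l₁, l₂), h₁, h₂⟩, rfl⟩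
  have hg_val (p : S) : {l | P l}.indicator (pathWeight V x) (g p) =
      pathWeight V x p.1.1 * pathWeight V y p.1.2 := by
    change {l | P l}.indicator _ (p.1.1 ++ p.1.2) = _
    have hp : p.1.1 ++ p.1.2 ∈ {l | P l} := (hP _).2 ⟨_, _, p.2.1, p.2.2, rfl⟩
    rw [indicator_of_mem hp, pathWeight_append, hA _ p.2.1]
  rw [killedMass, ← hg.tsum_eq hrange, tsum_congr hg_val, tsum_subtype S
    (fun p => pathWeight V x p.1 * pathWeight V y p.2), killedMass, killedMass,
    ← ENNReal.tsum_mul_right]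
  simp_rw [← ENNReal.tsum_mul_left]
  rw [← ENNReal.tsum_prod]
  refine tsum_congr fun p => ?_
  by_cases h₁ : A p.1 <;> by_cases h₂ : B p.2 <;> simp [S, h₁, h₂]

theorem killedMass_hitsFirst_visit (hxz : x ≠ z) (hyz : y ≠ z) :
    (killedMass V x fun l => HitsFirst C z x l ∧
        ∃ k, 0 < k ∧ k < l.length ∧ endPos x (l.take k) = y) =
      killedMass V x (HitsFirst (insert z C) y x) * killedMass V y (HitsFirst C z y) :=
  killedMass_eq_mul (fun _ h => h.endPos_eq) (fun _ _ _ _ h₁ h₂ h => h₁.eq_of_append_eq h₂ h)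
    fun _ => hitsFirst_and_visit_iff hxz hyz

theorem killedMass_hitsFirst_eq_mul_of_lt (hxy : x < y) (hyz : y < z) :
    killedMass V x (HitsFirst C z x) =
      killedMass V x (HitsFirst (insert z C) y x) * killedMass V y (HitsFirst C z y) := by
  rw [← killedMass_hitsFirst_visit (by omega) hyz.ne]
  congr with l
  exact ⟨fun h => ⟨h, h.exists_pos_visit hxy hyz⟩, And.left⟩

theorem killedMass_reaches_le (u : ℤ → ℝ≥0∞) (hz : 1 ≤ u z)
    (hu : ∀ y, y ≠ z → y ∉ C → 2⁻¹ * ENNReal.ofReal (Real.exp (-V y)) * ∑ b, u (y + step b) ≤ u y)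
    (x : ℤ) : killedMass V x (Reaches C z x) ≤ u x := by
  refine killedMass_le_of_forall_length_lt fun L => ?_
  induction L generalizing x with
  | zero => simp [killedMass_eq_zero]
  | succ L ih =>
    rw [killedMass_cons]
    by_cases hx : x ≠ z ∧ x ∉ C
    · have hcons (b : Bool) :
          (killedMass V (x + step b) fun l => Reaches C z x (b :: l) ∧ (b :: l).length < L + 1) =
            killedMass V (x + step b) fun l => Reaches C z (x + step b) l ∧ l.length < L := by
        simp [Reaches, hx]
      rw [indicator_of_notMem (fun h => hx.1 h.1), zero_add,
        Finset.sum_congr rfl fun b _ => hcons b]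
      calc _ ≤ 2⁻¹ * ENNReal.ofReal (Real.exp (-V x)) * ∑ b, u (x + step b) := by
            gcongr with b; exact ih _
        _ ≤ u x := hu x hx.1 hx.2
    · have hcons (b : Bool) :
          (killedMass V (x + step b) fun l => Reaches C z x (b :: l) ∧ (b :: l).length < L + 1) =
            0 :=
        killedMass_eq_zero fun l h => hx ⟨h.1.1, h.1.2.1⟩
      simp only [hcons, Finset.sum_const_zero, mul_zero, add_zero]
      by_cases hxz : x = z
      · subst hxz
        exact (indicator_le_self _ _ _).trans hz
      · rw [indicator_of_notMem (fun h => hxz h.1)]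
        exact zero_le

lemma inv_two_mul_sum_ofReal {a : ℝ} (ha : 0 ≤ a) {u : ℤ → ℝ} (hu : ∀ t, 0 ≤ u t) (y : ℤ) :
    2⁻¹ * ENNReal.ofReal a * ∑ b, ENNReal.ofReal (u (y + step b)) =
      ENNReal.ofReal (a * (u (y + 1) + u (y - 1)) / 2) := by
  rw [sum_bool_step (fun t => ENNReal.ofReal (u t)), ← ENNReal.ofReal_add (hu _) (hu _), mul_assoc,
    ← ENNReal.ofReal_mul ha,
    ENNReal.ofReal_div_of_pos two_pos, ENNReal.ofReal_ofNat, ENNReal.div_eq_inv_mul]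

theorem killedMass_hitsFirst_le (u : ℤ → ℝ) (hu0 : ∀ t, 0 ≤ u t) (hz : 1 ≤ u z)
    (hu : ∀ y, y ≠ z → y ∉ C → Real.exp (-V y) * (u (y + 1) + u (y - 1)) / 2 ≤ u y) (x : ℤ) :
    killedMass V x (HitsFirst C z x) ≤
      ENNReal.ofReal (Real.exp (-V x) * (u (x + 1) + u (x - 1)) / 2) := by
  have hreach (y : ℤ) : killedMass V y (Reaches C z y) ≤ ENNReal.ofReal (u y) := by
    refine killedMass_reaches_le (fun y => ENNReal.ofReal (u y)) (ENNReal.one_le_ofReal.2 hz)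
      (fun y hyz hyC => ?_) y
    rw [inv_two_mul_sum_ofReal (Real.exp_pos _).le hu0]
    exact ENNReal.ofReal_le_ofReal (hu y hyz hyC)
  rw [killedMass_cons, indicator_of_notMem (show [] ∉ {l | HitsFirst C z x l} from id), zero_add,
    ← inv_two_mul_sum_ofReal (Real.exp_pos _).le hu0]
  gcongr with b
  exact (killedMass_mono fun l h => h.2).trans (hreach _)

theorem killedMass_hitsFirst_le_exp (hV : ∀ t, 0 ≤ V t) (x : ℤ) :
    killedMass V x (HitsFirst C z x) ≤ ENNReal.ofReal (Real.exp (-V x)) := by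
  have hexp (y : ℤ) : Real.exp (-V y) ≤ 1 := Real.exp_le_one_iff.2 (neg_nonpos.2 (hV y))
  convert killedMass_hitsFirst_le (V := V) (C := C) (z := z) (fun _ => 1) (fun _ => zero_le_one)
    le_rfl (fun y _ _ => by linarith [hexp y]) x using 2
  ring

theorem killedMass_hitsFirst_le_one (hV : ∀ t, 0 ≤ V t) (x : ℤ) :
    killedMass V x (HitsFirst C z x) ≤ 1 :=
  (killedMass_hitsFirst_le_exp hV x).trans
    (ENNReal.ofReal_le_one.2 (Real.exp_le_one_iff.2 (neg_nonpos.2 (hV x))))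

section Ramp

variable {lo hi t : ℤ} {p q : ℝ}

def ramp (lo hi : ℤ) (p q : ℝ) (t : ℤ) : ℝ :=
  if t ≤ lo then p else if hi ≤ t then q else p + (q - p) * (t - lo) / (hi - lo)

lemma ramp_of_le_of_le (hlr : lo < hi) (hl : lo ≤ t) (hr : t ≤ hi) :
    ramp lo hi p q t = p + (q - p) * (t - lo) / (hi - lo) := by
  have hlr' : (hi - lo : ℝ) ≠ 0 := sub_ne_zero.2 (by exact_mod_cast hlr.ne')
  unfold ramp
  split_ifs with h₁ h₂
  · rw [le_antisymm h₁ hl]; simp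
  · rw [le_antisymm hr h₂, mul_div_assoc, div_self hlr']; ring
  · rfl

lemma ramp_nonneg (hlr : lo < hi) (hp : 0 ≤ p) (hq : 0 ≤ q) (t : ℤ) : 0 ≤ ramp lo hi p q t := by
  rcases le_or_gt t lo with hl | hl
  · simpa [ramp, hl] using hp
  rcases le_or_gt hi t with hr | hr
  · simpa [ramp, hl.not_ge, hr] using hq
  have hlr' : (0 : ℝ) < hi - lo := sub_pos.2 (by exact_mod_cast hlr)
  have hθ₀ : (0 : ℝ) ≤ (t - lo) / (hi - lo) :=
    div_nonneg (sub_nonneg.2 (by exact_mod_cast hl.le)) hlr'.le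
  have hθ₁ : (t - lo : ℝ) / (hi - lo) ≤ 1 :=
    (div_le_one hlr').2 (by linarith [(Int.cast_lt (R := ℝ)).2 hr])
  rw [ramp_of_le_of_le hlr hl.le hr.le, mul_div_assoc]
  nlinarith

lemma ramp_add_ramp (hlr : lo < hi) (hl : t ≠ lo) (hr : t ≠ hi) :
    ramp lo hi p q (t + 1) + ramp lo hi p q (t - 1) = 2 * ramp lo hi p q t := by
  rcases lt_or_gt_of_ne hl with hl | hl
  · simp [ramp, show t + 1 ≤ lo by omega, show t - 1 ≤ lo by omega, hl.le]; ring
  rcases lt_or_gt_of_ne hr with hr | hr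
  · rw [ramp_of_le_of_le hlr (by omega) (by omega), ramp_of_le_of_le hlr (by omega) (by omega),
      ramp_of_le_of_le hlr (by omega) (by omega)]
    push_cast
    ring
  · simp [ramp, show ¬ t + 1 ≤ lo by omega, show ¬ t - 1 ≤ lo by omega, show ¬ t ≤ lo by omega,
      show hi ≤ t + 1 by omega, show hi ≤ t - 1 by omega, hr.le]
    ring

lemma exp_neg_mul_ramp_le (hV : ∀ t, 0 ≤ V t) (hlr : lo < hi) (hp : 0 ≤ p) (hq : 0 ≤ q)
    (hl : t ≠ lo) (hr : t ≠ hi) :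
    Real.exp (-V t) * (ramp lo hi p q (t + 1) + ramp lo hi p q (t - 1)) / 2 ≤ ramp lo hi p q t := by
  rw [ramp_add_ramp hlr hl hr, mul_div_assoc, mul_div_cancel_left₀ _ two_ne_zero]
  exact mul_le_of_le_one_left (ramp_nonneg hlr hp hq t)
    (Real.exp_le_one_iff.2 (neg_nonpos.2 (hV t)))

end Ramp

theorem killedMass_hitsFirst_le_ruin (hV : ∀ t, 0 ≤ V t) {a : ℕ} (ha : 1 ≤ a) (hC : 1 ∈ C) :
    killedMass V 0 (HitsFirst C (-a) 0) ≤ ENNReal.ofReal (1 + (a : ℝ))⁻¹ := by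
  have hlr : -(a : ℤ) < 1 := by omega
  refine (killedMass_hitsFirst_le (ramp (-a) 1 1 0) (ramp_nonneg hlr zero_le_one le_rfl)
    (by simp [ramp]) (fun y hy hyC => exp_neg_mul_ramp_le hV hlr zero_le_one le_rfl hy
      (fun h => hyC (h ▸ hC))) 0).trans (ENNReal.ofReal_le_ofReal ?_)
  have ha' : (1 + a : ℝ) ≠ 0 := by positivity
  have hright : ramp (-a) 1 1 0 (0 + 1) = 0 := by simp [ramp, hlr]
  have hleft : ramp (-a) 1 1 0 (0 - 1) = 2 / (1 + a) := by
    rw [ramp_of_le_of_le hlr (by omega) (by omega)]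
    push_cast
    rw [show (1 : ℝ) - -a = 1 + a by ring]
    field_simp
    ring
  have h : Real.exp (-V 0) * (0 + 2 / (1 + a)) / 2 = Real.exp (-V 0) * (1 + (a : ℝ))⁻¹ := by
    field_simp
    ring
  rw [hright, hleft, h]
  exact mul_le_of_le_one_left (by positivity) (Real.exp_le_one_iff.2 (neg_nonpos.2 (hV 0)))

theorem killedMass_hitsFirst_le_occupied (hV : ∀ t, 0 ≤ V t) {a : ℕ} (ha : 1 ≤ a) :
    killedMass V (-a) (HitsFirst C 0 (-a)) ≤
      ENNReal.ofReal (2 * a * (Real.exp (V (-a)) - 1) + 1)⁻¹ := by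
  set β := (2 * (a : ℝ) * (Real.exp (V (-a)) - 1) + 1)⁻¹ with hβ_def
  have hlr : -(a : ℤ) < 0 := by omega
  have hD : 0 < 2 * (a : ℝ) * (Real.exp (V (-a)) - 1) + 1 := by
    nlinarith [Real.one_le_exp (hV (-a)), (Nat.cast_nonneg a : (0 : ℝ) ≤ a)]
  have hβ : 0 ≤ β := inv_nonneg.2 hD.le
  have hright : ramp (-a) 0 β 1 (-a + 1) = β + (1 - β) / a := by
    rw [ramp_of_le_of_le hlr (by omega) (by omega)]
    push_cast
    ring_nf
  have hleft : ramp (-a) 0 β 1 (-a - 1) = β := by simp [ramp]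
  -- `β` is chosen so that the supersolution inequality is an equality at the occupied site.
  have hkey :
      Real.exp (-V (-a)) * (ramp (-a) 0 β 1 (-a + 1) + ramp (-a) 0 β 1 (-a - 1)) / 2 = β := by
    have ha' : (a : ℝ) ≠ 0 := by positivity
    have hD' := hD.ne'
    rw [hright, hleft, hβ_def, Real.exp_neg]
    field_simp
    ring
  refine (killedMass_hitsFirst_le (ramp (-a) 0 β 1) (ramp_nonneg hlr hβ zero_le_one)
    (by simp [ramp, show a ≠ 0 by omega]) (fun y hy _ => ?_) (-a)).trans_eq (congrArg _ hkey)
  rcases eq_or_ne y (-a) with rfl | hya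
  · rw [hkey]
    simp [ramp]
  · exact exp_neg_mul_ramp_le hV hlr hβ zero_le_one hya hy

lemma hitsFirst_ofFn_iff {n : ℕ} (s : Fin n → Bool) : HitsFirst ∅ z x (List.ofFn s) ↔
    0 < n ∧ walkPos x s n = z ∧ ∀ k, 0 < k → k < n → walkPos x s k ≠ z := by
  simp [hitsFirst_empty_iff, walkPos_eq_endPos_take, List.take_of_length_le]

theorem hitSum_eq_toReal_killedMass (V : ℤ → ℝ) (x z : ℤ) (E : (n : ℕ) → (Fin n → Bool) → Prop)
    (P : List Bool → Prop) (hE : ∀ n s, E n s ↔ P (List.ofFn s)) :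
    hitSum x z (fun n s => ind (E n s) * wt V x s) =
      (killedMass V x fun l => HitsFirst ∅ z x l ∧ P l).toReal := by
  have hfin (l : List Bool) : {l | HitsFirst ∅ z x l ∧ P l}.indicator (pathWeight V x) l ≠ ⊤ :=
    ne_top_of_le_ne_top (pathWeight_ne_top V x l) (indicator_le_self _ _ _)
  rw [killedMass, ENNReal.tsum_list_eq_tsum_ofFn,
    ENNReal.tsum_toReal_eq fun n => ENNReal.sum_ne_top.2 fun s _ => hfin _, hitSum]
  refine tsum_congr fun n => ?_
  rw [ENNReal.toReal_sum fun s _ => hfin _, Finset.mul_sum]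
  refine Finset.sum_congr rfl fun s _ => ?_
  rw [← hitsFirst_ofFn_iff, hE]
  by_cases h : List.ofFn s ∈ {l | HitsFirst ∅ z x l ∧ P l}
  · rw [indicator_of_mem h, ← ofReal_wt, ENNReal.toReal_ofReal (by unfold wt; positivity)]
    simp [ind, h.1, h.2]
  · rw [indicator_of_notMem h, ENNReal.toReal_zero]
    by_cases h₁ : HitsFirst ∅ z x (List.ofFn s) <;> simp_all [ind]

theorem hitSum_wt_eq_toReal_killedMass (V : ℤ → ℝ) (x z : ℤ) :
    hitSum x z (fun _ s => wt V x s) = (killedMass V x (HitsFirst ∅ z x)).toReal := by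
  simpa [ind] using hitSum_eq_toReal_killedMass V x z (fun _ _ => True) (fun _ => True)
    fun _ _ => Iff.rfl

theorem killedMass_backtrack_le (hV : ∀ t, 0 ≤ V t) (a : ℕ) :
    killedMass V 0 (HitsFirst (insert 1 ∅) (-a) 0) * killedMass V (-a) (HitsFirst ∅ 1 (-a)) ≤
      ENNReal.ofReal
          (min (Real.exp (-V (-a))) ((2 * a * (Real.exp (V (-a)) - 1) + 1) * (1 + a))⁻¹) *
        killedMass V 0 (HitsFirst ∅ 1 0) := by
  obtain rfl | ha := Nat.eq_zero_or_pos a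
  · have hexp : Real.exp (-V 0) ≤ 1 := Real.exp_le_one_iff.2 (neg_nonpos.2 (hV 0))
    simp only [Nat.cast_zero, neg_zero, mul_zero, zero_mul, zero_add, add_zero, mul_one, inv_one,
      min_eq_left hexp]
    gcongr
    exact killedMass_hitsFirst_le_exp hV 0
  · rw [killedMass_hitsFirst_eq_mul_of_lt (y := 0) (by omega) one_pos, ← mul_assoc,
      ENNReal.ofReal_min]
    gcongr
    refine le_min ?_ ?_
    · calc _ ≤ 1 * ENNReal.ofReal (Real.exp (-V (-a))) :=
            mul_le_mul' (killedMass_hitsFirst_le_one hV 0) (killedMass_hitsFirst_le_exp hV _)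
        _ = _ := one_mul _
    · calc _ ≤ ENNReal.ofReal (1 + (a : ℝ))⁻¹ *
              ENNReal.ofReal (2 * a * (Real.exp (V (-a)) - 1) + 1)⁻¹ :=
            mul_le_mul' (killedMass_hitsFirst_le_ruin hV ha (mem_insert 1 ∅))
              (killedMass_hitsFirst_le_occupied hV ha)
        _ = _ := by rw [← ENNReal.ofReal_mul (by positivity), mul_inv, mul_comm]

end KilledWalk

open KilledWalk in
theorem backtrack_probability_bound_general (M : ℝ) (hM : 0 < M) (a₁ : ℕ) (V : ℤ → ℝ)
    (hval : ∀ z : ℤ, V z = 0 ∨ V z = M)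
    (hocc : V (-(a₁ : ℤ)) = M) :
    (hitSum 0 1 fun n s =>
        ind (∃ k, 0 < k ∧ k < n ∧ walkPos 0 s k = -(a₁ : ℤ)) * wt V 0 s) /
      (hitSum 0 1 fun _ s => wt V 0 s)
      ≤ min (Real.exp (-M)) ((2 * (a₁ : ℝ) * (Real.exp M - 1) + 1) * (1 + (a₁ : ℝ)))⁻¹ := by
  have hV (t : ℤ) : 0 ≤ V t := (hval t).elim (·.ge) (· ▸ hM.le)
  have hc : 0 ≤ min (Real.exp (-M)) ((2 * (a₁ : ℝ) * (Real.exp M - 1) + 1) * (1 + (a₁ : ℝ)))⁻¹ :=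
    le_min (Real.exp_pos _).le <| inv_nonneg.2 <| mul_nonneg
      (by nlinarith [Real.one_le_exp hM.le, (Nat.cast_nonneg a₁ : (0 : ℝ) ≤ a₁)]) (by positivity)
  rw [hitSum_eq_toReal_killedMass V 0 1 _
      (fun l => ∃ k, 0 < k ∧ k < l.length ∧ endPos 0 (l.take k) = -a₁)
      fun n s => by simp [walkPos_eq_endPos_take],
    hitSum_wt_eq_toReal_killedMass, ← ENNReal.toReal_div]
  refine ENNReal.toReal_le_of_le_ofReal hc (ENNReal.div_le_of_le_mul ?_)
  rw [killedMass_hitsFirst_visit zero_ne_one (by omega), ← hocc]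
  exact killedMass_backtrack_le hV a₁

/-- Lemma 2.4. For a `{0,M}`-valued potential with first occupied
site `−a₁` in `(−∞,0]`,
`P^V(τ₁ > τ_{−a₁} | τ₁ < ∞) ≤ min{e^{−M}, ((2a₁(e^M−1)+1)(1+a₁))⁻¹}`. -/
theorem backtrack_probability_bound (M : ℝ) (hM : 0 < M) (a₁ : ℕ) (V : ℤ → ℝ)
    (hval : ∀ z : ℤ, V z = 0 ∨ V z = M)
    (hvac : ∀ x : ℤ, -(a₁ : ℤ) < x → x ≤ 0 → V x = 0)
    (hocc : V (-(a₁ : ℤ)) = M) :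
    (hitSum 0 1 fun n s =>
        ind (∃ k, 0 < k ∧ k < n ∧ walkPos 0 s k = -(a₁ : ℤ)) * wt V 0 s) /
      (hitSum 0 1 fun _ s => wt V 0 s)
      ≤ min (Real.exp (-M)) ((2 * (a₁ : ℝ) * (Real.exp M - 1) + 1) * (1 + (a₁ : ℝ)))⁻¹ :=
  backtrack_probability_bound_general M hM a₁ V hval hocc
end
end

section
/- Let (X_i)_{i≥1} be i.i.d. nonnegative real random variables and suppose there is n_0 such that P(X_1 ≥ x) ≤ e^{−√x} for all x ≥ n_0. Then there exist constants C, c ∈ (0,∞) and N ∈ ℕ such that for all n ≥ N: P( Σ_{i=1}^n X_i ≥ Cn ) ≤ e^{−c√n}. -/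
/-!
Truncate at level `n`. With probability at most `n · P(X₁ ≥ n) ≤ n e^{-√n}` some `X_i` reaches
`n`; otherwise the sum equals that of `Y_i = min(X_i, n)`, to which we apply a Chernoff bound with
`t = 1/(2√n)`. Because `t Y_i ≤ √X_i / 2`, the inequality `e^u ≤ 1 + u e^u` gives
`E e^{t Y_i} ≤ 1 + t E[X₁ e^{√X₁/2}] ≤ 1 + t K` with `K = 64 E e^{3√X₁/4}`, finite by the tail
bound. Hence `P(∑ Y_i ≥ (K + 2) n) ≤ e^{-2tn} = e^{-√n}`, and
`(n + 1) e^{-√n} ≤ e^{-√n/4}` for large `n`.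
-/

open MeasureTheory ProbabilityTheory Real Finset

theorem exp_le_one_add_mul_exp (u : ℝ) : exp u ≤ 1 + u * exp u := by
  have h : exp (-u) * exp u = 1 := by rw [← exp_add, neg_add_cancel, exp_zero]
  nlinarith [add_one_le_exp (-u), exp_pos u]

theorem self_le_mul_exp_sqrt_div_four {x : ℝ} (hx : 0 ≤ x) : x ≤ 64 * exp (√x / 4) := by
  have hy : √x ≤ 8 * exp (√x / 8) := by linarith [add_one_le_exp (√x / 8)]
  calc x = √x ^ 2 := (sq_sqrt hx).symm
    _ ≤ (8 * exp (√x / 8)) ^ 2 := by gcongr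
    _ = 64 * exp (√x / 4) := by rw [mul_pow, ← exp_nat_mul]; ring_nf

theorem sq_add_one_le_exp {s : ℝ} (hs : 16 ≤ s) : s ^ 2 + 1 ≤ exp (3 / 4 * s) := by
  have h := pow_div_factorial_le_exp (x := 3 / 4 * s) (by positivity) 3
  norm_num [Nat.factorial] at h
  nlinarith

theorem min_le_sqrt_mul_sqrt {x L : ℝ} (hx : 0 ≤ x) (hL : 0 ≤ L) : min x L ≤ √L * √x := by
  calc min x L = √(min x L) * √(min x L) := (mul_self_sqrt (le_min hx hL)).symm
    _ ≤ √L * √x := by gcongr <;> simp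

theorem exp_mul_min_le {t x L : ℝ} (ht : 0 ≤ t) (hx : 0 ≤ x) (hL : 0 ≤ L)
    (htL : t * √L ≤ 1 / 2) : exp (t * min x L) ≤ 1 + t * (64 * exp (3 / 4 * √x)) := by
  have hmin : t * min x L ≤ √x / 2 :=
    calc t * min x L ≤ t * √L * √x := by
          rw [mul_assoc]; exact mul_le_mul_of_nonneg_left (min_le_sqrt_mul_sqrt hx hL) ht
      _ ≤ 1 / 2 * √x := by gcongr
      _ = √x / 2 := by ring
  calc exp (t * min x L) ≤ 1 + t * min x L * exp (t * min x L) := exp_le_one_add_mul_exp _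
    _ ≤ 1 + t * x * exp (√x / 2) := by
        gcongr
        exact min_le_left x L
    _ ≤ 1 + t * (64 * exp (√x / 4)) * exp (√x / 2) := by
        gcongr; exact self_le_mul_exp_sqrt_div_four hx
    _ = 1 + t * (64 * exp (3 / 4 * √x)) := by
        rw [mul_assoc, mul_assoc, ← exp_add]; ring_nf

theorem setOf_le_sum_subset {Ω : Type*} (X : ℕ → Ω → ℝ) (n : ℕ) (a L : ℝ) :
    {ω | a ≤ ∑ i ∈ range n, X i ω} ⊆
      (⋃ i ∈ range n, {ω | L ≤ X i ω}) ∪ {ω | a ≤ ∑ i ∈ range n, min (X i ω) L} := by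
  intro ω hω
  by_cases hbig : ∃ i ∈ range n, L ≤ X i ω
  · obtain ⟨i, hi, hLi⟩ := hbig
    exact Or.inl (Set.mem_biUnion hi hLi)
  · push Not at hbig
    refine Or.inr ?_
    rwa [Set.mem_ofPred_eq, sum_congr rfl fun i hi => min_eq_left (hbig i hi).le]

section Probability

variable {Ω : Type*} [MeasurableSpace Ω] {P : Measure Ω}

theorem measure_lt_exp_mul_sqrt_le {Y : Ω → ℝ} {a x₀ : ℝ} (ha : 0 < a)
    (htail : ∀ x, x₀ ≤ x → P {ω | x ≤ Y ω} ≤ ENNReal.ofReal (exp (-√x)))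
    {t : ℝ} (ht : exp (a * √x₀) < t) :
    P {ω | t < exp (a * √(Y ω))} ≤ ENNReal.ofReal (t ^ (-a⁻¹)) := by
  have ht0 : 0 < t := (exp_pos _).trans ht
  set s := log t / a
  have hs : √x₀ < s := by
    rw [lt_div_iff₀ ha, mul_comm, ← log_exp (a * √x₀)]
    exact log_lt_log (exp_pos _) ht
  have hs0 : 0 ≤ s := (sqrt_nonneg _).trans hs.le
  have hsub : {ω | t < exp (a * √(Y ω))} ⊆ {ω | s ^ 2 ≤ Y ω} := by
    intro ω hω
    have : log t < a * √(Y ω) := by simpa using log_lt_log ht0 hω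
    exact ((lt_sqrt hs0).1 (by rw [div_lt_iff₀ ha]; linarith)).le
  calc P {ω | t < exp (a * √(Y ω))} ≤ P {ω | s ^ 2 ≤ Y ω} := measure_mono hsub
    _ ≤ ENNReal.ofReal (exp (-√(s ^ 2))) := htail _ ((sqrt_le_left hs0).1 hs.le)
    _ = ENNReal.ofReal (t ^ (-a⁻¹)) := by
        rw [sqrt_sq hs0, rpow_def_of_pos ht0]; congr 2; ring

/-- Layer cake: above `exp (a √x₀)` the tail of `exp (a √Y)` is at most `t ^ (-1/a)`, which is
integrable at infinity since `a < 1`. -/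
theorem integrable_exp_mul_sqrt_of_tail [IsFiniteMeasure P] {Y : Ω → ℝ} (hY : Measurable Y)
    {a x₀ : ℝ} (ha0 : 0 < a) (ha1 : a < 1)
    (htail : ∀ x, x₀ ≤ x → P {ω | x ≤ Y ω} ≤ ENNReal.ofReal (exp (-√x))) :
    Integrable (fun ω => exp (a * √(Y ω))) P := by
  have hm : Measurable fun ω => exp (a * √(Y ω)) := by fun_prop
  refine ⟨hm.aestronglyMeasurable, ?_⟩
  simp_rw [HasFiniteIntegral, Real.enorm_eq_ofReal (exp_pos _).le]
  rw [lintegral_eq_lintegral_meas_lt P (ae_of_all _ fun ω => (exp_pos _).le) hm.aemeasurable]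
  set s₀ := exp (a * √x₀)
  have hs₀ : 0 < s₀ := exp_pos _
  rw [← Set.Ioc_union_Ioi_eq_Ioi hs₀.le,
    lintegral_union measurableSet_Ioi (Set.Ioc_disjoint_Ioi le_rfl)]
  refine ENNReal.add_lt_top.2 ⟨?_, ?_⟩
  · calc ∫⁻ t in Set.Ioc 0 s₀, P {ω | t < exp (a * √(Y ω))}
        ≤ ∫⁻ _ in Set.Ioc 0 s₀, P Set.univ :=
          lintegral_mono fun _ => measure_mono (Set.subset_univ _)
      _ < ⊤ := by simp [ENNReal.mul_lt_top, measure_lt_top]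
  · have hint : IntegrableOn (fun t : ℝ => t ^ (-a⁻¹)) (Set.Ioi s₀) :=
      integrableOn_Ioi_rpow_of_lt (by rw [neg_lt_neg_iff]; exact one_lt_inv₀ ha0 |>.2 ha1) hs₀
    calc ∫⁻ t in Set.Ioi s₀, P {ω | t < exp (a * √(Y ω))}
        ≤ ∫⁻ t in Set.Ioi s₀, ‖t ^ (-a⁻¹)‖ₑ := by
          refine setLIntegral_mono' measurableSet_Ioi fun t ht => ?_
          exact (measure_lt_exp_mul_sqrt_le ha0 htail ht).trans (Real.ofReal_le_enorm _)
      _ < ⊤ := hint.2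

theorem integrable_exp_mul_min [IsFiniteMeasure P] {Y : Ω → ℝ} (hY : Measurable Y) {t L : ℝ}
    (ht : 0 ≤ t) : Integrable (fun ω => exp (t * min (Y ω) L)) P := by
  refine .of_bound (by fun_prop) (exp (t * L)) (ae_of_all _ fun ω => ?_)
  rw [norm_of_nonneg (exp_pos _).le]
  gcongr
  exact min_le_right _ _

theorem mgf_min_le_exp [IsProbabilityMeasure P] {Y : Ω → ℝ} (hY : Measurable Y)
    (hnonneg : ∀ ω, 0 ≤ Y ω) (hint : Integrable (fun ω => exp (3 / 4 * √(Y ω))) P)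
    {t L : ℝ} (ht : 0 ≤ t) (hL : 0 ≤ L) (htL : t * √L ≤ 1 / 2) :
    mgf (fun ω => min (Y ω) L) P t ≤ exp (t * (64 * ∫ ω, exp (3 / 4 * √(Y ω)) ∂P)) := by
  have hint' : Integrable (fun ω => 1 + t * (64 * exp (3 / 4 * √(Y ω)))) P :=
    (integrable_const 1).add ((hint.const_mul 64).const_mul t)
  calc mgf (fun ω => min (Y ω) L) P t
      ≤ ∫ ω, 1 + t * (64 * exp (3 / 4 * √(Y ω))) ∂P :=
        integral_mono (integrable_exp_mul_min hY ht) hint'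
          fun ω => exp_mul_min_le ht (hnonneg ω) hL htL
    _ = 1 + t * (64 * ∫ ω, exp (3 / 4 * √(Y ω)) ∂P) := by
        rw [integral_add (integrable_const 1) ((hint.const_mul 64).const_mul t), integral_const,
          integral_const_mul, integral_const_mul]
        simp
    _ ≤ exp (t * (64 * ∫ ω, exp (3 / 4 * √(Y ω)) ∂P)) := by
        linarith [add_one_le_exp (t * (64 * ∫ ω, exp (3 / 4 * √(Y ω)) ∂P))]

theorem measure_le_sum_range_le [IsFiniteMeasure P] {Y : ℕ → Ω → ℝ} (hmeas : ∀ i, Measurable (Y i))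
    (hindep : iIndepFun Y P) (hident : ∀ i, IdentDistrib (Y i) (Y 0) P P) {t : ℝ} (ht : 0 ≤ t)
    (hint : ∀ i, Integrable (fun ω => exp (t * Y i ω)) P) (n : ℕ) (ε : ℝ) :
    P {ω | ε ≤ ∑ i ∈ range n, Y i ω} ≤ ENNReal.ofReal (exp (-t * ε) * mgf (Y 0) P t ^ n) := by
  have hchernoff := measure_ge_le_exp_mul_mgf (X := ∑ i ∈ range n, Y i) ε ht
    (hindep.integrable_exp_mul_sum hmeas fun i _ => hint i)
  rw [hindep.mgf_sum hmeas, prod_eq_pow_card fun i _ => mgf_congr_of_identDistrib _ _ (hident i) t,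
    card_range] at hchernoff
  rw [← ofReal_measureReal]
  simpa only [Finset.sum_apply] using ENNReal.ofReal_le_ofReal hchernoff

theorem measure_biUnion_range_le {X : ℕ → Ω → ℝ} (hident : ∀ i, IdentDistrib (X i) (X 0) P P)
    (n : ℕ) (L : ℝ) :
    P (⋃ i ∈ range n, {ω | L ≤ X i ω}) ≤ n * P {ω | L ≤ X 0 ω} :=
  calc P (⋃ i ∈ range n, {ω | L ≤ X i ω}) ≤ ∑ i ∈ range n, P {ω | L ≤ X i ω} :=
        measure_biUnion_finset_le _ _
    _ = ∑ _i ∈ range n, P {ω | L ≤ X 0 ω} :=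
        sum_congr rfl fun i _ => (hident i).measure_mem_eq measurableSet_Ici
    _ = n * P {ω | L ≤ X 0 ω} := by rw [sum_const, card_range, nsmul_eq_mul]

theorem measure_le_sum_le_add [IsProbabilityMeasure P] {X : ℕ → Ω → ℝ}
    (hmeas : ∀ i, Measurable (X i)) (hindep : iIndepFun X P)
    (hident : ∀ i, IdentDistrib (X i) (X 0) P P) (hnonneg : ∀ i ω, 0 ≤ X i ω)
    (hint : Integrable (fun ω => exp (3 / 4 * √(X 0 ω))) P) {n : ℕ} (hn : 0 < n) :
    P {ω | (64 * ∫ ω, exp (3 / 4 * √(X 0 ω)) ∂P + 2) * n ≤ ∑ i ∈ range n, X i ω} ≤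
      n * P {ω | (n : ℝ) ≤ X 0 ω} + ENNReal.ofReal (exp (-√n)) := by
  set K := 64 * ∫ ω, exp (3 / 4 * √(X 0 ω)) ∂P
  set t := (2 * √(n : ℝ))⁻¹
  have hsqrt : 0 < √(n : ℝ) := sqrt_pos.2 (Nat.cast_pos.2 hn)
  have ht : 0 < t := by positivity
  have htn : t * √n = 1 / 2 := by simp only [t]; field_simp
  have htn' : t * n = √n / 2 :=
    calc t * n = t * √n * √n := by rw [mul_assoc, mul_self_sqrt (Nat.cast_nonneg n)]
      _ = √n / 2 := by rw [htn]; ring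
  have htrunc : Measurable fun x : ℝ => min x n := measurable_id.min measurable_const
  have hmgf : mgf (fun ω => min (X 0 ω) n) P t ≤ exp (t * K) :=
    mgf_min_le_exp (hmeas 0) (hnonneg 0) hint ht.le (Nat.cast_nonneg n) htn.le
  have htruncated : P {ω | (K + 2) * n ≤ ∑ i ∈ range n, min (X i ω) n} ≤
      ENNReal.ofReal (exp (-√n)) :=
    calc _ ≤ ENNReal.ofReal (exp (-t * ((K + 2) * n)) * mgf (fun ω => min (X 0 ω) n) P t ^ n) :=
          measure_le_sum_range_le (Y := fun i ω => min (X i ω) n)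
            (fun i => htrunc.comp (hmeas i)) (hindep.comp _ fun _ => htrunc)
            (fun i => (hident i).comp htrunc) ht.le
            (fun i => integrable_exp_mul_min (hmeas i) ht.le) n _
      _ ≤ ENNReal.ofReal (exp (-t * ((K + 2) * n)) * exp (t * K) ^ n) := by
          gcongr; exact mgf_nonneg
      _ = ENNReal.ofReal (exp (-√n)) := by
          rw [← exp_nat_mul, ← exp_add]; congr 2; linear_combination (-2) * htn'
  calc _ ≤ P (⋃ i ∈ range n, {ω | (n : ℝ) ≤ X i ω}) +
        P {ω | (K + 2) * n ≤ ∑ i ∈ range n, min (X i ω) n} :=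
        (measure_mono (setOf_le_sum_subset X n _ _)).trans (measure_union_le _ _)
    _ ≤ n * P {ω | (n : ℝ) ≤ X 0 ω} + ENNReal.ofReal (exp (-√n)) :=
        add_le_add (measure_biUnion_range_le hident n n) htruncated

end Probability

theorem natCast_add_one_mul_exp_neg_sqrt_le {n : ℕ} (hn : 256 ≤ n) :
    ((n : ℝ) + 1) * exp (-√n) ≤ exp (-(1 / 4 * √n)) := by
  have hs : 16 ≤ √(n : ℝ) := by
    rw [show (16 : ℝ) = √256 by rw [show (256 : ℝ) = 16 ^ 2 by norm_num, sqrt_sq (by norm_num)]]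
    exact sqrt_le_sqrt (by exact_mod_cast hn)
  calc ((n : ℝ) + 1) * exp (-√n) = (√n ^ 2 + 1) * exp (-√n) := by
        rw [sq_sqrt (Nat.cast_nonneg n)]
    _ ≤ exp (3 / 4 * √n) * exp (-√n) := by gcongr; exact sq_add_one_le_exp hs
    _ = exp (-(1 / 4 * √n)) := by rw [← exp_add]; ring_nf

/-- Lemma A.3. If `(X_i)` are i.i.d. nonnegative random
variables with `P(X₁ ≥ x) ≤ e^{−√x}` for all `x ≥ n₀`, then there are constants
`C, c ∈ (0,∞)` such that `P(Σ_{i=1}^n X_i ≥ Cn) ≤ e^{−c√n}` for all large `n`. -/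
theorem subexponential_sum_bound {Ω : Type*} [MeasurableSpace Ω]
    (P : Measure Ω) [IsProbabilityMeasure P]
    (X : ℕ → Ω → ℝ) (hmeas : ∀ i, Measurable (X i))
    (hindep : iIndepFun X P)
    (hident : ∀ i, P.map (X i) = P.map (X 0))
    (hnonneg : ∀ i ω, 0 ≤ X i ω)
    (n₀ : ℕ)
    (htail : ∀ x : ℝ, (n₀ : ℝ) ≤ x →
      P {ω | x ≤ X 0 ω} ≤ ENNReal.ofReal (Real.exp (-Real.sqrt x))) :
    ∃ C : ℝ, 0 < C ∧ ∃ c : ℝ, 0 < c ∧ ∃ N : ℕ, ∀ n : ℕ, N ≤ n →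
      P {ω | C * (n : ℝ) ≤ ∑ i ∈ Finset.range n, X i ω} ≤
        ENNReal.ofReal (Real.exp (-(c * Real.sqrt (n : ℝ)))) := by
  have hident' i : IdentDistrib (X i) (X 0) P P :=
    ⟨(hmeas i).aemeasurable, (hmeas 0).aemeasurable, hident i⟩
  have hint :=
    integrable_exp_mul_sqrt_of_tail (hmeas 0) (a := 3 / 4) (by norm_num) (by norm_num) htail
  refine ⟨64 * ∫ ω, exp (3 / 4 * √(X 0 ω)) ∂P + 2, by positivity, 1 / 4, by norm_num,
    max n₀ 256, fun n hn => ?_⟩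
  have hn₀ : (n₀ : ℝ) ≤ n := by exact_mod_cast le_of_max_le_left hn
  calc _ ≤ n * P {ω | (n : ℝ) ≤ X 0 ω} + ENNReal.ofReal (exp (-√n)) :=
        measure_le_sum_le_add hmeas hindep hident' hnonneg hint (by omega)
    _ ≤ n * ENNReal.ofReal (exp (-√n)) + ENNReal.ofReal (exp (-√n)) := by
        gcongr; exact htail n hn₀
    _ = ENNReal.ofReal ((n + 1) * exp (-√n)) := by
        rw [ENNReal.ofReal_mul (by positivity), ENNReal.ofReal_add (by positivity) zero_le_one,
          ENNReal.ofReal_natCast, ENNReal.ofReal_one, add_mul, one_mul]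
    _ ≤ ENNReal.ofReal (exp (-(1 / 4 * √n))) :=
        ENNReal.ofReal_le_ofReal (natCast_add_one_mul_exp_neg_sqrt_le (le_of_max_le_right hn))
end
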